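/- Let μ₁, μ₂ be real numbers, σ₁, σ₂ > 0, s₁, s₂ > 0, and n₁, n₂ > 0. Set a_j = (s_j²/n_j)·μ_j/(σ_j² + s_j²/n_j) and b_j = σ_j²/(σ_j² + s_j²/n_j) for j = 1, 2, and let δ(y₁, y₂) = 1[a₁ + b₁·y₁ > a₂ + b₂·y₂]. Then the iterated integral of δ(y₁, y₂)·m₁ + (1 − δ(y₁, y₂))·m₂, where y₁ is integrated against gaussianReal m₁ (s₁²/n₁), y₂ against gaussianReal m₂ (s₂²/n₂), m₁ against gaussianReal μ₁ σ₁², and m₂ against gaussianReal μ₂ σ₂², equals μ₁ + e·Φ(e/v) + v·φ(e/v), where e = μ₂ − μ₁ and v = √(σ₁⁴/(σ₁² + s₁²/n₁) + σ₂⁴/(σ₂² + s₂²/n₂)). -/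

import Mathlib

/-!
Integrating out `y₂`, `y₁`, `m₂`, `m₁` in turn, every intermediate integrand has the shape
`c + q y + (p + r y) Φ((x + b y)/√W) + K φ((x + b y)/√W)`, and integrating it against
`y ~ N(m, V)` gives the same shape evaluated at `y = m`, with `W` replaced by `W + b² V`.
After standardising `y`, this rests on `E[(p + qZ) Φ(α + βZ)] = p Φ(α/r) + (qβ/r) φ(α/r)` for
`Z ~ N(0, 1)` and `r = √(1 + β²)`: both sides vanish as `α → -∞`, and both have as `α`-derivative
the Gaussian integral `E[(p + qZ) φ(α + βZ)]`, computed by completing the square.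
In the end the accumulated variance `∑ⱼ bⱼ² (σⱼ² + sⱼ²/nⱼ)` is `v²`, and since the posterior mean
fixes the prior mean (`aⱼ + bⱼ μⱼ = μⱼ`) the final argument is `-e/v`.
-/

open MeasureTheory Real ProbabilityTheory

/-- Standard normal density. -/
noncomputable def stdNormalPdf (x : ℝ) : ℝ := Real.exp (-x ^ 2 / 2) / Real.sqrt (2 * Real.pi)

/-- Standard normal CDF. -/
noncomputable def stdNormalCdf (x : ℝ) : ℝ := ∫ t in Set.Iic x, stdNormalPdf t

open Filter Set Topology
open scoped NNReal

lemma stdNormalPdf_eq_gaussianPDFReal : stdNormalPdf = gaussianPDFReal 0 1 := by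
  ext x
  simp [stdNormalPdf, gaussianPDFReal, div_eq_inv_mul]

lemma stdNormalPdf_nonneg (x : ℝ) : 0 ≤ stdNormalPdf x := by
  unfold stdNormalPdf; positivity

lemma stdNormalPdf_neg (x : ℝ) : stdNormalPdf (-x) = stdNormalPdf x := by
  simp [stdNormalPdf]

lemma stdNormalPdf_le_one (x : ℝ) : stdNormalPdf x ≤ 1 := by
  have h2π : 1 ≤ √(2 * π) := Real.one_le_sqrt.2 (by linarith [Real.pi_gt_three])
  rw [stdNormalPdf, div_le_one (by positivity)]
  exact (Real.exp_le_one_iff.2 (by nlinarith [sq_nonneg x])).trans h2π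

@[fun_prop]
lemma continuous_stdNormalPdf : Continuous stdNormalPdf := by
  unfold stdNormalPdf; fun_prop

lemma hasDerivAt_stdNormalPdf (x : ℝ) : HasDerivAt stdNormalPdf (-x * stdNormalPdf x) x := by
  have h : HasDerivAt (fun y : ℝ ↦ -y ^ 2 / 2) (-x) x :=
    ((hasDerivAt_pow 2 x).neg.div_const 2).congr_deriv (by push_cast; ring)
  exact (h.exp.div_const √(2 * π)).congr_deriv (by simp only [stdNormalPdf]; ring)

lemma integrable_stdNormalPdf : Integrable stdNormalPdf := by
  rw [stdNormalPdf_eq_gaussianPDFReal]; exact integrable_gaussianPDFReal 0 1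

lemma integral_gaussianReal_zero_one_eq_integral_mul_stdNormalPdf (f : ℝ → ℝ) :
    ∫ x, f x ∂gaussianReal 0 1 = ∫ x, f x * stdNormalPdf x := by
  simp [integral_gaussianReal_eq_integral_smul one_ne_zero, stdNormalPdf_eq_gaussianPDFReal,
    mul_comm]

lemma stdNormalCdf_eq_cdf : stdNormalCdf = cdf (gaussianReal 0 1) := by
  ext x
  rw [cdf_eq_real, measureReal_def, gaussianReal_apply_eq_integral 0 one_ne_zero,
    ENNReal.toReal_ofReal (setIntegral_nonneg measurableSet_Iic fun _ _ ↦
      gaussianPDFReal_nonneg 0 1 _), stdNormalCdf, stdNormalPdf_eq_gaussianPDFReal]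

lemma hasDerivAt_stdNormalCdf (x : ℝ) : HasDerivAt stdNormalCdf (stdNormalPdf x) x := by
  have h : stdNormalCdf = fun y ↦ stdNormalCdf 0 + ∫ t in (0 : ℝ)..y, stdNormalPdf t := by
    ext y
    have := intervalIntegral.integral_Iic_sub_Iic
      (integrable_stdNormalPdf.integrableOn (s := Iic 0))
      (integrable_stdNormalPdf.integrableOn (s := Iic y))
    rw [stdNormalCdf, stdNormalCdf]; linarith
  rw [h]
  exact (intervalIntegral.integral_hasDerivAt_right integrable_stdNormalPdf.intervalIntegrable
    (continuous_stdNormalPdf.stronglyMeasurableAtFilter _ _)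
    continuous_stdNormalPdf.continuousAt).const_add _

@[fun_prop]
lemma continuous_stdNormalCdf : Continuous stdNormalCdf :=
  continuous_iff_continuousAt.2 fun x ↦ (hasDerivAt_stdNormalCdf x).continuousAt

lemma stdNormalCdf_neg (x : ℝ) : stdNormalCdf (-x) = 1 - stdNormalCdf x := by
  have := nullSingletonClass_gaussianReal (μ := 0) one_ne_zero
  have h := gaussianReal_map_neg (μ := 0) (v := 1)
  rw [neg_zero] at h
  rw [stdNormalCdf_eq_cdf, cdf_eq_real, cdf_eq_real]
  nth_rewrite 1 [← h]
  rw [map_measureReal_apply measurable_neg measurableSet_Iic, Set.neg_preimage, Set.neg_Iic,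
    neg_neg, ← compl_Iio, probReal_compl_eq_one_sub measurableSet_Iio,
    measureReal_congr Iio_ae_eq_Iic]

lemma tendsto_stdNormalCdf_atBot : Tendsto stdNormalCdf atBot (𝓝 0) :=
  stdNormalCdf_eq_cdf ▸ tendsto_cdf_atBot _

lemma tendsto_stdNormalPdf_atBot : Tendsto stdNormalPdf atBot (𝓝 0) := by
  have hsq : Tendsto (fun y : ℝ ↦ y ^ 2) atBot atTop := by
    simpa only [sq, id] using tendsto_id.atBot_mul_atBot₀ tendsto_id
  have h := (Real.tendsto_exp_atBot.comp ((tendsto_neg_atTop_atBot.comp hsq).atBot_div_const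
    two_pos)).div_const √(2 * π)
  rwa [zero_div] at h

lemma integrable_linear_gaussianReal (p q m : ℝ) (V : ℝ≥0) :
    Integrable (fun x ↦ p + q * x) (gaussianReal m V) :=
  (integrable_const p).add (((memLp_id_gaussianReal 1).integrable le_rfl).const_mul q)

lemma integral_linear_gaussianReal (p q m : ℝ) (V : ℝ≥0) :
    ∫ x, (p + q * x) ∂gaussianReal m V = p + q * m := by
  have hid : Integrable (fun x : ℝ ↦ x) (gaussianReal m V) :=
    (memLp_id_gaussianReal 1).integrable le_rfl
  rw [integral_add (integrable_const p) (hid.const_mul q), integral_const_mul]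
  simp [integral_id_gaussianReal]

lemma stdNormalPdf_mul_stdNormalPdf (α β x : ℝ) :
    stdNormalPdf (α + β * x) * stdNormalPdf x =
      stdNormalPdf (α / √(1 + β ^ 2)) / √(1 + β ^ 2) *
        gaussianPDFReal (-(α * β / (1 + β ^ 2))) (1 + β ^ 2)⁻¹.toNNReal x := by
  have hc : 0 < 1 + β ^ 2 := by positivity
  rw [gaussianPDFReal, Real.coe_toNNReal _ (inv_pos.2 hc).le, Real.sqrt_mul (by positivity),
    Real.sqrt_inv]
  simp only [stdNormalPdf, div_pow, Real.sq_sqrt hc.le]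
  field_simp
  rw [← Real.exp_add, ← Real.exp_add]
  congr 1
  field_simp
  ring

lemma integral_linear_mul_stdNormalPdf (p q α β : ℝ) :
    ∫ x, (p + q * x) * stdNormalPdf (α + β * x) ∂gaussianReal 0 1 =
      (p - q * (α * β / (1 + β ^ 2))) * (stdNormalPdf (α / √(1 + β ^ 2)) / √(1 + β ^ 2)) := by
  have hv : (1 + β ^ 2)⁻¹.toNNReal ≠ 0 := by rw [Ne, Real.toNNReal_eq_zero, not_le]; positivity
  rw [integral_gaussianReal_zero_one_eq_integral_mul_stdNormalPdf]
  simp_rw [mul_assoc, stdNormalPdf_mul_stdNormalPdf, mul_left_comm (p + q * _), integral_const_mul,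
    mul_comm (p + q * _), ← smul_eq_mul (a := gaussianPDFReal _ _ _),
    ← integral_gaussianReal_eq_integral_smul hv, integral_linear_gaussianReal]
  ring

lemma integrable_linear_mul_stdNormalCdf (p q α β : ℝ) :
    Integrable (fun x ↦ (p + q * x) * stdNormalCdf (α + β * x)) (gaussianReal 0 1) :=
  (integrable_linear_gaussianReal p q 0 1).mul_bdd (by fun_prop) (c := 1) <| ae_of_all _ fun x ↦ by
    rw [stdNormalCdf_eq_cdf, Real.norm_of_nonneg (cdf_nonneg _ _)]; exact cdf_le_one _ _

lemma integrable_linear_mul_stdNormalPdf (p q α β : ℝ) :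
    Integrable (fun x ↦ (p + q * x) * stdNormalPdf (α + β * x)) (gaussianReal 0 1) :=
  (integrable_linear_gaussianReal p q 0 1).mul_bdd (by fun_prop) (c := 1) <| ae_of_all _ fun x ↦ by
    rw [Real.norm_of_nonneg (stdNormalPdf_nonneg _)]; exact stdNormalPdf_le_one _

lemma hasDerivAt_integral_linear_mul_stdNormalCdf (p q α β : ℝ) :
    HasDerivAt (fun a ↦ ∫ x, (p + q * x) * stdNormalCdf (a + β * x) ∂gaussianReal 0 1)
      (∫ x, (p + q * x) * stdNormalPdf (α + β * x) ∂gaussianReal 0 1) α := by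
  refine (hasDerivAt_integral_of_dominated_loc_of_deriv_le (bound := fun x ↦ |p + q * x|)
    (F' := fun a x ↦ (p + q * x) * stdNormalPdf (a + β * x))
    univ_mem (.of_forall fun a ↦ (integrable_linear_mul_stdNormalCdf p q a β).aestronglyMeasurable)
    (integrable_linear_mul_stdNormalCdf p q α β) (by fun_prop) ?_
    (integrable_linear_gaussianReal p q 0 1).abs ?_).2
  · refine ae_of_all _ fun x a _ ↦ ?_
    rw [norm_mul, Real.norm_of_nonneg (stdNormalPdf_nonneg _)]
    exact mul_le_of_le_one_right (abs_nonneg _) (stdNormalPdf_le_one _)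
  · refine ae_of_all _ fun x a _ ↦ ?_
    simpa using ((hasDerivAt_stdNormalCdf (a + β * x)).comp a
      ((hasDerivAt_id a).add_const (β * x))).const_mul (p + q * x)

lemma tendsto_integral_linear_mul_stdNormalCdf_atBot (p q β : ℝ) :
    Tendsto (fun a ↦ ∫ x, (p + q * x) * stdNormalCdf (a + β * x) ∂gaussianReal 0 1)
      atBot (𝓝 0) := by
  convert tendsto_integral_filter_of_dominated_convergence (l := atBot)
    (F := fun a x ↦ (p + q * x) * stdNormalCdf (a + β * x)) (f := fun _ ↦ 0) (fun x ↦ |p + q * x|)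
    (.of_forall fun a ↦ (integrable_linear_mul_stdNormalCdf p q a β).aestronglyMeasurable) ?_
    (integrable_linear_gaussianReal p q 0 1).abs (ae_of_all _ fun x ↦ ?_) using 2
  · exact (integral_zero _ _).symm
  · refine .of_forall fun a ↦ ae_of_all _ fun x ↦ ?_
    rw [norm_mul, stdNormalCdf_eq_cdf, Real.norm_of_nonneg (cdf_nonneg _ _)]
    exact mul_le_of_le_one_right (abs_nonneg _) (cdf_le_one _ _)
  · simpa using ((tendsto_stdNormalCdf_atBot.comp
      (tendsto_atBot_add_const_right _ (β * x) tendsto_id)).const_mul (p + q * x))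

lemma eq_of_hasDerivAt_of_tendsto_atBot {E : Type*} [NormedAddCommGroup E] [NormedSpace ℝ E]
    {F G f' : ℝ → E} {c : E} (hF : ∀ x, HasDerivAt F (f' x) x) (hG : ∀ x, HasDerivAt G (f' x) x)
    (hF₀ : Tendsto F atBot (𝓝 c)) (hG₀ : Tendsto G atBot (𝓝 c)) : F = G := by
  have hconst : ∀ x y, (F - G) x = (F - G) y := is_const_of_deriv_eq_zero
    (fun x ↦ ((hF x).sub (hG x)).differentiableAt)
    fun x ↦ by rw [((hF x).sub (hG x)).deriv, sub_self]
  funext x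
  have h : Tendsto (fun _ : ℝ ↦ F x - G x) atBot (𝓝 (c - c)) :=
    (hF₀.sub hG₀).congr fun y ↦ hconst y x
  exact sub_eq_zero.1 (sub_self c ▸ tendsto_nhds_unique tendsto_const_nhds h)

lemma integral_linear_mul_stdNormalCdf (p q α β : ℝ) :
    ∫ x, (p + q * x) * stdNormalCdf (α + β * x) ∂gaussianReal 0 1 =
      p * stdNormalCdf (α / √(1 + β ^ 2)) +
        q * β / √(1 + β ^ 2) * stdNormalPdf (α / √(1 + β ^ 2)) := by
  set r := √(1 + β ^ 2)
  have hr : 0 < r := by positivity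
  have hr2 : r ^ 2 = 1 + β ^ 2 := Real.sq_sqrt (by positivity)
  refine congrFun (eq_of_hasDerivAt_of_tendsto_atBot
    (G := fun a ↦ p * stdNormalCdf (a / r) + q * β / r * stdNormalPdf (a / r))
    (f' := fun a ↦ (p - q * (a * β / (1 + β ^ 2))) * (stdNormalPdf (a / r) / r))
    (fun a ↦ ?_) (fun a ↦ ?_) (tendsto_integral_linear_mul_stdNormalCdf_atBot p q β) ?_) α
  · exact integral_linear_mul_stdNormalPdf p q a β ▸
      hasDerivAt_integral_linear_mul_stdNormalCdf p q a β
  · have hdiv := (hasDerivAt_id' a).div_const r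
    refine (((hasDerivAt_stdNormalCdf _).comp a hdiv).const_mul p |>.add
      (((hasDerivAt_stdNormalPdf _).comp a hdiv).const_mul (q * β / r))).congr_deriv ?_
    rw [← hr2]
    field_simp
    ring
  · have hdiv : Tendsto (fun a ↦ a / r) atBot atBot := tendsto_id.atBot_div_const hr
    rw [show (0 : ℝ) = p * 0 + q * β / r * 0 by ring]
    exact ((tendsto_stdNormalCdf_atBot.comp hdiv).const_mul p).add
      ((tendsto_stdNormalPdf_atBot.comp hdiv).const_mul (q * β / r))

lemma gaussianReal_eq_map_gaussianReal_zero_one (m : ℝ) (V : ℝ≥0) :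
    gaussianReal m V = (gaussianReal 0 1).map (fun z ↦ m + √V * z) := by
  rw [← Function.comp_def (m + ·) (√V * ·), ← Measure.map_map (by fun_prop) (by fun_prop),
    gaussianReal_map_const_mul, gaussianReal_map_const_add]
  congr 1
  · simp
  · ext; simp

lemma integral_gaussianReal_eq_integral_gaussianReal_zero_one {E : Type*} [NormedAddCommGroup E]
    [NormedSpace ℝ E] (f : ℝ → E) (m : ℝ) {V : ℝ≥0} (hV : V ≠ 0) :
    ∫ y, f y ∂gaussianReal m V = ∫ z, f (m + √V * z) ∂gaussianReal 0 1 := by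
  have hemb : MeasurableEmbedding fun z : ℝ ↦ m + √V * z :=
    (measurableEmbedding_addLeft m).comp (measurableEmbedding_mulLeft₀ (by positivity))
  rw [gaussianReal_eq_map_gaussianReal_zero_one, hemb.integral_map]

lemma integral_gaussianReal_linear_add_cdf_add_pdf (c q p r K x b m : ℝ) {V : ℝ≥0} (hV : V ≠ 0)
    {W : ℝ} (hW : 0 < W) :
    ∫ y, (c + q * y + (p + r * y) * stdNormalCdf ((x + b * y) / √W) +
        K * stdNormalPdf ((x + b * y) / √W)) ∂gaussianReal m V =
      c + q * m + (p + r * m) * stdNormalCdf ((x + b * m) / √(W + b ^ 2 * V)) +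
        (r * b * V + K * √W) / √(W + b ^ 2 * V) *
          stdNormalPdf ((x + b * m) / √(W + b ^ 2 * V)) := by
  have hVpos : (0 : ℝ) < V := by positivity
  have hr : √(1 + (b * √V / √W) ^ 2) = √(W + b ^ 2 * V) / √W := by
    rw [← Real.sqrt_div (by positivity), div_pow, mul_pow, Real.sq_sqrt hVpos.le,
      Real.sq_sqrt hW.le]
    congr 1
    field_simp
  have hz : ∀ z, c + q * (m + √V * z) + (p + r * (m + √V * z)) *
      stdNormalCdf ((x + b * (m + √V * z)) / √W) + K * stdNormalPdf ((x + b * (m + √V * z)) / √W) =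
      (c + q * m + q * √V * z) +
        (p + r * m + r * √V * z) * stdNormalCdf ((x + b * m) / √W + b * √V / √W * z) +
        (K + 0 * z) * stdNormalPdf ((x + b * m) / √W + b * √V / √W * z) := by
    intro z
    rw [show (x + b * (m + √V * z)) / √W = (x + b * m) / √W + b * √V / √W * z by ring]
    ring
  rw [integral_gaussianReal_eq_integral_gaussianReal_zero_one _ _ hV]
  simp only [hz]
  rw [integral_add _ (integrable_linear_mul_stdNormalPdf _ _ _ _), integral_add
    (integrable_linear_gaussianReal _ _ _ _) (integrable_linear_mul_stdNormalCdf _ _ _ _),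
    integral_linear_gaussianReal, integral_linear_mul_stdNormalCdf,
    integral_linear_mul_stdNormalPdf, hr]
  · have hα : (x + b * m) / √W / (√(W + b ^ 2 * V) / √W) = (x + b * m) / √(W + b ^ 2 * V) := by
      field_simp
    rw [hα]
    field_simp
    rw [Real.sq_sqrt hVpos.le]
    ring
  · exact (integrable_linear_gaussianReal _ _ _ _).add (integrable_linear_mul_stdNormalCdf _ _ _ _)

lemma integral_gaussianReal_ite_mul_add (u w a b c m : ℝ) (hb : 0 < b) {V : ℝ≥0} (hV : V ≠ 0) :
    ∫ y, ((if c > a + b * y then (1 : ℝ) else 0) * u +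
        (1 - (if c > a + b * y then (1 : ℝ) else 0)) * w) ∂gaussianReal m V =
      w + (u - w) * stdNormalCdf ((c - a - b * m) / √(b ^ 2 * V)) := by
  set d := (c - a - b * m) / √(b ^ 2 * V)
  have hsqrt : √(b ^ 2 * V) = b * √V := by rw [Real.sqrt_mul (sq_nonneg b), Real.sqrt_sq hb.le]
  have hz : ∀ z, (if c > a + b * (m + √V * z) then (1 : ℝ) else 0) = (Iio d).indicator 1 z := by
    intro z
    have : c > a + b * (m + √V * z) ↔ z < d := by
      rw [gt_iff_lt, lt_div_iff₀ (by positivity), hsqrt]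
      constructor <;> intro h <;> linarith
    simp [Set.indicator_apply, this]
  have := nullSingletonClass_gaussianReal (μ := 0) one_ne_zero
  rw [integral_gaussianReal_eq_integral_gaussianReal_zero_one _ _ hV]
  simp_rw [hz, show ∀ x : ℝ, x * u + (1 - x) * w = w + (u - w) * x from fun x ↦ by ring]
  rw [integral_add (integrable_const w) ?_,
    integral_const_mul, integral_indicator_one measurableSet_Iio, measureReal_congr Iio_ae_eq_Iic,
    stdNormalCdf_eq_cdf, cdf_eq_real]
  · simp
  · exact ((integrable_const 1).indicator measurableSet_Iio).const_mul _

section TestAndRoll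

variable {a₁ a₂ b₁ b₂ : ℝ}

lemma integral_roll_profit_over_y₂ (hb₂ : 0 < b₂) {t₂ : ℝ} (ht₂ : 0 < t₂) (m₁ m₂ y₁ : ℝ) :
    ∫ y₂, ((if a₁ + b₁ * y₁ > a₂ + b₂ * y₂ then (1 : ℝ) else 0) * m₁ +
        (1 - (if a₁ + b₁ * y₁ > a₂ + b₂ * y₂ then (1 : ℝ) else 0)) * m₂)
        ∂gaussianReal m₂ t₂.toNNReal =
      m₂ + (m₁ - m₂) * stdNormalCdf ((a₁ - a₂ - b₂ * m₂ + b₁ * y₁) / √(b₂ ^ 2 * t₂)) := by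
  rw [integral_gaussianReal_ite_mul_add _ _ _ _ _ _ hb₂ (by simpa), Real.coe_toNNReal _ ht₂.le]
  ring_nf

lemma integral_roll_profit_over_y₁ {t₁ W : ℝ} (ht₁ : 0 < t₁) (hW : 0 < W) (m₁ m₂ x : ℝ) :
    ∫ y₁, (m₂ + (m₁ - m₂) * stdNormalCdf ((x + b₁ * y₁) / √W)) ∂gaussianReal m₁ t₁.toNNReal =
      m₂ + (m₁ - m₂) * stdNormalCdf ((x + b₁ * m₁) / √(W + b₁ ^ 2 * t₁)) := by
  convert integral_gaussianReal_linear_add_cdf_add_pdf m₂ 0 (m₁ - m₂) 0 0 x b₁ m₁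
    (V := t₁.toNNReal) (by simpa) hW using 1
  · congr 1; ext y; ring
  · rw [Real.coe_toNNReal _ ht₁.le]; ring

lemma integral_roll_profit_over_m₂ {S W : ℝ} (hS : 0 < S) (hW : 0 < W) (m₁ μ₂ : ℝ) :
    ∫ m₂, (m₂ + (m₁ - m₂) * stdNormalCdf ((a₁ - a₂ - b₂ * m₂ + b₁ * m₁) / √W))
        ∂gaussianReal μ₂ S.toNNReal =
      μ₂ + (m₁ - μ₂) * stdNormalCdf ((a₁ - a₂ - b₂ * μ₂ + b₁ * m₁) / √(W + b₂ ^ 2 * S)) +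
        b₂ * S / √(W + b₂ ^ 2 * S) *
          stdNormalPdf ((a₁ - a₂ - b₂ * μ₂ + b₁ * m₁) / √(W + b₂ ^ 2 * S)) := by
  convert integral_gaussianReal_linear_add_cdf_add_pdf 0 1 m₁ (-1) 0 (a₁ - a₂ + b₁ * m₁) (-b₂) μ₂
    (V := S.toNNReal) (by simpa) hW using 1
  · congr 1; ext y; ring_nf
  · rw [Real.coe_toNNReal _ hS.le]; ring_nf

lemma integral_roll_profit_over_m₁ {S W : ℝ} (hS : 0 < S) (hW : 0 < W) (μ₁ μ₂ K x : ℝ) :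
    ∫ m₁, (μ₂ + (m₁ - μ₂) * stdNormalCdf ((x + b₁ * m₁) / √W) +
        K * stdNormalPdf ((x + b₁ * m₁) / √W)) ∂gaussianReal μ₁ S.toNNReal =
      μ₂ + (μ₁ - μ₂) * stdNormalCdf ((x + b₁ * μ₁) / √(W + b₁ ^ 2 * S)) +
        (b₁ * S + K * √W) / √(W + b₁ ^ 2 * S) *
          stdNormalPdf ((x + b₁ * μ₁) / √(W + b₁ ^ 2 * S)) := by
  convert integral_gaussianReal_linear_add_cdf_add_pdf μ₂ 0 (-μ₂) 1 K x b₁ μ₁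
    (V := S.toNNReal) (by simpa) hW using 1
  · congr 1; ext y; ring
  · rw [Real.coe_toNNReal _ hS.le]; ring

end TestAndRoll

theorem expected_roll_profit_asymmetric (μ₁ μ₂ σ₁ σ₂ s₁ s₂ n₁ n₂ : ℝ)
    (hσ₁ : 0 < σ₁) (hσ₂ : 0 < σ₂) (hs₁ : 0 < s₁) (hs₂ : 0 < s₂)
    (hn₁ : 0 < n₁) (hn₂ : 0 < n₂)
    (a₁ a₂ b₁ b₂ : ℝ)
    (ha₁ : a₁ = (s₁ ^ 2 / n₁) * μ₁ / (σ₁ ^ 2 + s₁ ^ 2 / n₁))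
    (ha₂ : a₂ = (s₂ ^ 2 / n₂) * μ₂ / (σ₂ ^ 2 + s₂ ^ 2 / n₂))
    (hb₁ : b₁ = σ₁ ^ 2 / (σ₁ ^ 2 + s₁ ^ 2 / n₁))
    (hb₂ : b₂ = σ₂ ^ 2 / (σ₂ ^ 2 + s₂ ^ 2 / n₂))
    (e v : ℝ) (he : e = μ₂ - μ₁)
    (hv : v = Real.sqrt (σ₁ ^ 4 / (σ₁ ^ 2 + s₁ ^ 2 / n₁) + σ₂ ^ 4 / (σ₂ ^ 2 + s₂ ^ 2 / n₂))) :
    (∫ m₁, (∫ m₂, (∫ y₁, (∫ y₂,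
            ((if a₁ + b₁ * y₁ > a₂ + b₂ * y₂ then (1 : ℝ) else 0) * m₁ +
              (1 - (if a₁ + b₁ * y₁ > a₂ + b₂ * y₂ then (1 : ℝ) else 0)) * m₂)
              ∂(gaussianReal m₂ ((s₂ ^ 2 / n₂).toNNReal)))
            ∂(gaussianReal m₁ ((s₁ ^ 2 / n₁).toNNReal)))
          ∂(gaussianReal μ₂ ((σ₂ ^ 2).toNNReal)))
        ∂(gaussianReal μ₁ ((σ₁ ^ 2).toNNReal))) =
      μ₁ + e * stdNormalCdf (e / v) + v * stdNormalPdf (e / v) := by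
  have ht₁ : 0 < s₁ ^ 2 / n₁ := by positivity
  have ht₂ : 0 < s₂ ^ 2 / n₂ := by positivity
  have hb₂pos : 0 < b₂ := hb₂ ▸ by positivity
  simp (disch := positivity) only [integral_roll_profit_over_y₂ hb₂pos ht₂,
    integral_roll_profit_over_y₁ ht₁, integral_roll_profit_over_m₂, integral_roll_profit_over_m₁]
  have hv₀ : 0 < v := hv ▸ by positivity
  have hmean : a₁ - a₂ - b₂ * μ₂ + b₁ * μ₁ = -e := by
    rw [ha₁, ha₂, hb₁, hb₂, he]; field_simp; ring
  have hvar : b₂ ^ 2 * (s₂ ^ 2 / n₂) + b₁ ^ 2 * (s₁ ^ 2 / n₁) + b₂ ^ 2 * σ₂ ^ 2 +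
      b₁ ^ 2 * σ₁ ^ 2 = v ^ 2 := by
    rw [hv, Real.sq_sqrt (by positivity), hb₁, hb₂]; field_simp; ring
  have hgain : b₁ * σ₁ ^ 2 + b₂ * σ₂ ^ 2 = v ^ 2 := by
    rw [hv, Real.sq_sqrt (by positivity), hb₁, hb₂]; field_simp
  rw [hmean, hvar, div_mul_cancel₀ _ (by positivity), hgain, Real.sqrt_sq hv₀.le, neg_div,
    stdNormalCdf_neg, stdNormalPdf_neg, he]
  field_simp
  ring
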